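/- Let D ⊂ ℂ^p be the open Euclidean unit ball with Carathéodory distance ρ, base point 0, and let (y_k) ⊂ D converge to ξ with ‖ξ‖ = 1. Then for every z ∈ D, lim_k (ρ(z,y_k) − ρ(0,y_k)) = ½ log( |1 − ⟨z,ξ⟩|² / (1 − ‖z‖²) ). -/

import Mathlib

/-!
With `a = ‖g_{−z}(y_k)‖` and `b = ‖y_k‖`, one has
`tanh⁻¹ a − tanh⁻¹ b = log((1+a)/(1+b)) + ½ log((1−b²)/(1−a²))`.
The Möbius identity turns the last ratio into `|1 − ⟨z,y_k⟩|²/(1 − ‖z‖²)`, which converges to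
`|1 − ⟨z,ξ⟩|²/(1 − ‖z‖²) > 0`. Since `b → 1`, this forces `a → 1` as well, so the first
term tends to `log 1 = 0`.
-/

open scoped InnerProductSpace

/-- The inverse hyperbolic tangent, `tanh⁻¹ t = ½ log((1+t)/(1−t))`. -/
noncomputable def arctanh (t : ℝ) : ℝ := (1 / 2) * Real.log ((1 + t) / (1 - t))

open Filter Topology Real

lemma arctanh_eq_half_log_sub {t : ℝ} (ht : |t| < 1) :
    arctanh t = 1 / 2 * (log (1 + t) - log (1 - t)) := by
  obtain ⟨ht₁, ht₂⟩ := abs_lt.mp ht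
  rw [arctanh, log_div (by linarith) (by linarith)]

lemma arctanh_sub_arctanh {a b : ℝ} (ha : |a| < 1) (hb : |b| < 1) :
    arctanh a - arctanh b =
      log ((1 + a) / (1 + b)) + 1 / 2 * log ((1 - b ^ 2) / (1 - a ^ 2)) := by
  obtain ⟨ha₁, ha₂⟩ := abs_lt.mp ha
  obtain ⟨hb₁, hb₂⟩ := abs_lt.mp hb
  have hfac : ∀ t : ℝ, 1 - t ^ 2 = (1 + t) * (1 - t) := fun t => by ring
  rw [arctanh_eq_half_log_sub ha, arctanh_eq_half_log_sub hb, hfac, hfac,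
    log_div (by linarith) (by linarith),
    log_div (mul_pos (by linarith) (by linarith)).ne' (mul_pos (by linarith) (by linarith)).ne',
    log_mul (by linarith) (by linarith), log_mul (by linarith) (by linarith)]
  ring

lemma tendsto_arctanh_sub_arctanh {ι : Type*} {l : Filter ι} {a b : ι → ℝ} {L : ℝ}
    (ha₀ : ∀ i, 0 ≤ a i) (ha₁ : ∀ i, a i < 1) (hb₀ : ∀ i, 0 ≤ b i) (hb₁ : ∀ i, b i < 1)
    (hb : Tendsto b l (𝓝 1))
    (hratio : Tendsto (fun i => (1 - b i ^ 2) / (1 - a i ^ 2)) l (𝓝 L)) (hL : 0 < L) :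
    Tendsto (fun i => arctanh (a i) - arctanh (b i)) l (𝓝 (1 / 2 * log L)) := by
  have hsub_sq : Tendsto (fun i => 1 - a i ^ 2) l (𝓝 0) := by
    have hnum : Tendsto (fun i => 1 - b i ^ 2) l (𝓝 0) := by
      simpa using (tendsto_const_nhds (x := (1 : ℝ))).sub (hb.pow 2)
    refine (zero_div L ▸ hnum.div hratio hL.ne').congr fun i => ?_
    have ha_sq := sub_pos.mpr (pow_lt_one₀ (ha₀ i) (ha₁ i) two_ne_zero)
    have hb_sq := sub_pos.mpr (pow_lt_one₀ (hb₀ i) (hb₁ i) two_ne_zero)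
    simp only [Pi.div_apply]
    field_simp
  have ha : Tendsto a l (𝓝 1) := by
    have hsq : Tendsto (fun i => a i ^ 2) l (𝓝 1) := by
      simpa using (tendsto_const_nhds (x := (1 : ℝ))).sub hsub_sq
    simpa [sqrt_sq (ha₀ _)] using hsq.sqrt
  have hfirst : Tendsto (fun i => log ((1 + a i) / (1 + b i))) l (𝓝 0) := by
    have := (((tendsto_const_nhds (x := (1 : ℝ))).add ha).div
      ((tendsto_const_nhds (x := (1 : ℝ))).add hb) (by norm_num)).log (by norm_num)
    simpa using this
  have habs : ∀ {t : ℝ}, 0 ≤ t → t < 1 → |t| < 1 := fun h₀ h₁ => abs_lt.mpr ⟨by linarith, h₁⟩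
  have hsum := hfirst.add ((hratio.log hL.ne').const_mul (1 / 2))
  rw [zero_add] at hsum
  exact hsum.congr fun i =>
    (arctanh_sub_arctanh (habs (ha₀ i) (ha₁ i)) (habs (hb₀ i) (hb₁ i))).symm

lemma norm_one_sub_inner_pos {𝕜 E : Type*} [RCLike 𝕜] [NormedAddCommGroup E]
    [InnerProductSpace 𝕜 E] {z w : E} (hz : ‖z‖ < 1) (hw : ‖w‖ ≤ 1) :
    0 < ‖1 - ⟪z, w⟫_𝕜‖ := by
  have hlt : ‖⟪z, w⟫_𝕜‖ < ‖(1 : 𝕜)‖ := by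
    rw [norm_one]
    calc ‖⟪z, w⟫_𝕜‖ ≤ ‖z‖ * ‖w‖ := norm_inner_le_norm z w
      _ < 1 := by nlinarith [norm_nonneg z, norm_nonneg w]
  exact norm_pos_iff.mpr (sub_ne_zero.mpr fun h => hlt.ne (h ▸ rfl))

theorem stmt8 {p : ℕ}
    (g : EuclideanSpace ℂ (Fin p) → EuclideanSpace ℂ (Fin p) → EuclideanSpace ℂ (Fin p))
    (hg0 : ∀ x, g 0 x = x)
    (hgid : ∀ y z : EuclideanSpace ℂ (Fin p), ‖y‖ < 1 → ‖z‖ < 1 →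
      1 - ‖g (-y) z‖ ^ 2 =
        (1 - ‖y‖ ^ 2) * (1 - ‖z‖ ^ 2) / ‖1 - ⟪y, z⟫_ℂ‖ ^ 2)
    (ρ : EuclideanSpace ℂ (Fin p) → EuclideanSpace ℂ (Fin p) → ℝ)
    (hρ : ∀ x y, ρ x y = arctanh ‖g (-x) y‖)
    (y : ℕ → EuclideanSpace ℂ (Fin p)) (hy : ∀ k, ‖y k‖ < 1)
    (ξ : EuclideanSpace ℂ (Fin p)) (hξ : ‖ξ‖ = 1)
    (hconv : Filter.Tendsto y Filter.atTop (nhds ξ))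
    (z : EuclideanSpace ℂ (Fin p)) (hz : ‖z‖ < 1) :
    Filter.Tendsto (fun k => ρ z (y k) - ρ 0 (y k)) Filter.atTop
      (nhds ((1 / 2) * Real.log (‖1 - ⟪z, ξ⟫_ℂ‖ ^ 2 / (1 - ‖z‖ ^ 2)))) := by
  have hz₂ : 0 < 1 - ‖z‖ ^ 2 := sub_pos.mpr (pow_lt_one₀ (norm_nonneg z) hz two_ne_zero)
  have hy₂ : ∀ k, 0 < 1 - ‖y k‖ ^ 2 :=
    fun k => sub_pos.mpr (pow_lt_one₀ (norm_nonneg _) (hy k) two_ne_zero)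
  have hden : ∀ k, 0 < ‖1 - ⟪z, y k⟫_ℂ‖ ^ 2 :=
    fun k => pow_pos (norm_one_sub_inner_pos hz (hy k).le) 2
  have hmoved_lt : ∀ k, ‖g (-z) (y k)‖ < 1 := fun k => by
    have : 0 < 1 - ‖g (-z) (y k)‖ ^ 2 := by
      rw [hgid z (y k) hz (hy k)]
      exact div_pos (mul_pos hz₂ (hy₂ k)) (hden k)
    exact (pow_lt_one_iff_of_nonneg (norm_nonneg _) two_ne_zero).mp (sub_pos.mp this)
  have hratio : ∀ k, ‖1 - ⟪z, y k⟫_ℂ‖ ^ 2 / (1 - ‖z‖ ^ 2) =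
      (1 - ‖y k‖ ^ 2) / (1 - ‖g (-z) (y k)‖ ^ 2) := fun k => by
    rw [hgid z (y k) hz (hy k)]
    field_simp [(hy₂ k).ne', (hden k).ne']
  have hlim : Tendsto (fun k => ‖1 - ⟪z, y k⟫_ℂ‖ ^ 2 / (1 - ‖z‖ ^ 2)) atTop
      (𝓝 (‖1 - ⟪z, ξ⟫_ℂ‖ ^ 2 / (1 - ‖z‖ ^ 2))) :=
    ((tendsto_const_nhds.sub (tendsto_const_nhds.inner hconv)).norm.pow 2).div_const _
  simp only [hρ, neg_zero, hg0]
  exact tendsto_arctanh_sub_arctanh (fun _ => norm_nonneg _) hmoved_lt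
    (fun _ => norm_nonneg _) hy (hξ ▸ hconv.norm) (hlim.congr hratio)
    (div_pos (pow_pos (norm_one_sub_inner_pos hz hξ.le) 2) hz₂)
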